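/- Parameterized NPG regret lemma: Let |A| = A ≥ 2, T ≥ 1, β > 0, W > 0, and η = √(2·log(A)/(β·W²·T)). Let θ ↦ π_θ be a policy parameterization over ℝ^d such that π_θ(a|s) > 0 for all θ, s, a; for each (s,a) the map θ ↦ log π_θ(a|s) is differentiable with gradient ∇_θ log π_θ(a|s) that is β-Lipschitz in θ; and Σ_a π_θ(a|s)·∇_θ log π_θ(a|s) = 0 for all θ and s. Let θ^1 be such that π_{θ^1}(·|s) is uniform on A for every s, let w^1, …, w^T ∈ ℝ^d with ‖w^t‖ ≤ W, and set θ^{t+1} = θ^t + η·w^t. Let f^1, …, f^T : S×A → ℝ be arbitrary and define g^t(s,a) = E_{a'∼π_{θ^t}(·|s)}[f^t(s,a')] + ⟨w^t, ∇_θ log π_{θ^t}(a|s)⟩. Then for any comparator policy π^e, Σ_{t=1}^T E_{(s,a)∼d^{π^e}}[g^t(s,a) − E_{a'∼π_{θ^t}(·|s)}[g^t(s,a')]] ≤ √(2·β·W²·log(A)·T). -/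

import Mathlib

open Finset

structure FinMDP (S A : Type*) [Fintype S] [Fintype A] where
  P : S → A → S → ℝ
  P_nonneg : ∀ s a s', 0 ≤ P s a s'
  P_sum : ∀ s a, ∑ s', P s a s' = 1
  r : S → A → ℝ
  r_nonneg : ∀ s a, 0 ≤ r s a
  r_le_one : ∀ s a, r s a ≤ 1
  disc : ℝ
  disc_pos : 0 < disc
  disc_lt_one : disc < 1
  init : S → ℝ
  init_nonneg : ∀ s, 0 ≤ init s
  init_sum : ∑ s, init s = 1

variable {S A : Type*} [Fintype S] [Fintype A] [Nonempty S] [Nonempty A]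

/-- A policy assigns to each state a probability mass function over actions. -/
def IsPolicy (π : S → A → ℝ) : Prop :=
  (∀ s a, 0 ≤ π s a) ∧ ∀ s, ∑ a, π s a = 1

/-- The Bellman operator `T^π`. -/
noncomputable def FinMDP.bellman (M : FinMDP S A) (π f : S → A → ℝ) (s : S) (a : A) : ℝ :=
  M.r s a + M.disc * ∑ s', M.P s a s' * ∑ a', π s' a' * f s' a'

/-- `Q` is the action-value function of `π`, i.e. satisfies the Bellman equation. -/
def FinMDP.IsQ (M : FinMDP S A) (π Q : S → A → ℝ) : Prop :=
  ∀ s a, Q s a = M.bellman π Q s a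

/-- The state value `V^π(s)` induced by a `Q`-function. -/
noncomputable def vOf (π Q : S → A → ℝ) (s : S) : ℝ := ∑ a, π s a * Q s a

/-- The scalar value `V^π = E_{s ∼ μ₀}[V^π(s)]`. -/
noncomputable def FinMDP.scalarV (M : FinMDP S A) (π Q : S → A → ℝ) : ℝ :=
  ∑ s, M.init s * vOf π Q s

/-- Distribution of the state at time `t` under policy `π`. -/
noncomputable def FinMDP.stateDist (M : FinMDP S A) (π : S → A → ℝ) : ℕ → S → ℝ
  | 0 => M.init
  | (t + 1) => fun s' => ∑ s, ∑ a, FinMDP.stateDist M π t s * π s a * M.P s a s'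

/-- The discounted occupancy measure `d^π(s,a) = (1-γ) ∑_t γ^t Pr^π(s_t = s, a_t = a)`. -/
noncomputable def FinMDP.occ (M : FinMDP S A) (π : S → A → ℝ) (s : S) (a : A) : ℝ :=
  (1 - M.disc) * ∑' t : ℕ, M.disc ^ t * M.stateDist π t s * π s a

/-!
Fix a state `s`. Because `∇ log π_θ(a|s)` is `β`-Lipschitz, the descent lemma gives
`log π_{θ + η w}(a|s) ≥ log π_θ(a|s) + η ⟪w, ∇ log π_θ(a|s)⟫ - β η² ‖w‖² / 2`; averaging over
`a ∼ π^e(·|s)` bounds each regret term by the increment of the potential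
`∑ₐ π^e(a|s) log π_{θ^t}(a|s)` plus `β η² W² / 2`. The potential starts at `-log |A|` (uniform
`θ¹`) and is always `≤ 0`, so telescoping gives regret `≤ log |A| / η + T η β W² / 2`, which equals
`√(2 β W² log |A| T)` for the chosen `η`. Since `∑ₐ π_θ(a|s) ∇ log π_θ(a|s) = 0`, the advantage
`g^t - E_{π_{θ^t}} g^t` is exactly `⟪w^t, ∇ log π_{θ^t}⟫`, and `d^{π^e}(s,a)` factors as a state
distribution times `π^e(a|s)`, so the state-wise bound averages to the claim.
-/

section Descent

variable {E : Type*} [NormedAddCommGroup E] [InnerProductSpace ℝ E] [CompleteSpace E]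

theorem inner_sub_half_mul_sq_le_of_lipschitz_gradient {h : E → ℝ} {g : E → E} {β : ℝ}
    (hg : ∀ x, HasGradientAt h (g x) x) (hlip : ∀ x y, ‖g x - g y‖ ≤ β * ‖x - y‖) (x v : E) :
    inner ℝ (g x) v - β / 2 * ‖v‖ ^ 2 ≤ h (x + v) - h x := by
  set φ : ℝ → ℝ := fun t => h (x + t • v) - t * inner ℝ (g x) v + β / 2 * t ^ 2 * ‖v‖ ^ 2
  have hφ : ∀ t, HasDerivAt φ
      (inner ℝ (g (x + t • v)) v - inner ℝ (g x) v + β * t * ‖v‖ ^ 2) t := by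
    intro t
    have hline : HasDerivAt (fun t : ℝ => x + t • v) v t := by
      simpa using ((hasDerivAt_id t).smul_const v).const_add x
    have hh := (hg (x + t • v)).hasFDerivAt.comp_hasDerivAt t hline
    simp only [InnerProductSpace.toDual_apply_apply] at hh
    refine ((hh.sub ((hasDerivAt_id t).mul_const (inner ℝ (g x) v))).add
      (((hasDerivAt_pow 2 t).const_mul (β / 2)).mul_const (‖v‖ ^ 2))).congr_deriv ?_
    simp only [Nat.cast_ofNat]
    ring
  have hφ' : ∀ t ∈ interior (Set.Ici (0 : ℝ)),
      0 ≤ inner ℝ (g (x + t • v)) v - inner ℝ (g x) v + β * t * ‖v‖ ^ 2 := by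
    intro t ht
    rw [interior_Ici] at ht
    have hdist : ‖g (x + t • v) - g x‖ ≤ β * t * ‖v‖ := by
      simpa [norm_smul, abs_of_pos (Set.mem_Ioi.mp ht), mul_assoc] using hlip (x + t • v) x
    have := real_inner_le_norm (g x - g (x + t • v)) v
    rw [inner_sub_left, norm_sub_rev] at this
    nlinarith [norm_nonneg v]
  have hmono : MonotoneOn φ (Set.Ici 0) :=
    monotoneOn_of_hasDerivWithinAt_nonneg (convex_Ici 0)
      (fun t _ => (hφ t).continuousAt.continuousWithinAt)
      (fun t _ => (hφ t).hasDerivWithinAt) hφ'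
  have h01 : φ 0 ≤ φ 1 := hmono Set.self_mem_Ici (Set.mem_Ici.mpr zero_le_one) zero_le_one
  have hφ0 : φ 0 = h x := by simp [φ]
  have hφ1 : φ 1 = h (x + v) - inner ℝ (g x) v + β / 2 * ‖v‖ ^ 2 := by simp [φ]
  linarith

end Descent

section EntropyBounds

variable {A : Type*} [Fintype A]

theorem sum_mul_log_nonpos {q r : A → ℝ} (hq0 : ∀ a, 0 ≤ q a) (hr0 : ∀ a, 0 < r a)
    (hr1 : ∑ a, r a = 1) : ∑ a, q a * Real.log (r a) ≤ 0 := by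
  refine sum_nonpos fun a _ =>
    mul_nonpos_of_nonneg_of_nonpos (hq0 a) (Real.log_nonpos (hr0 a).le ?_)
  exact hr1 ▸ single_le_sum (fun a' _ => (hr0 a').le) (mem_univ a)

theorem sum_mul_log_uniform {q : A → ℝ} (hq1 : ∑ a, q a = 1) :
    ∑ a, q a * Real.log (1 / Fintype.card A) = -Real.log (Fintype.card A) := by
  rw [← sum_mul, hq1, one_mul, one_div, Real.log_inv]

end EntropyBounds

theorem add_mul_sq_eq_mul_sqrt {L β W η T : ℝ} (hL : 0 ≤ L) (hβWT : 0 < β * W ^ 2 * T)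
    (hη : η = √(2 * L / (β * W ^ 2 * T))) :
    L + T * (β / 2 * η ^ 2 * W ^ 2) = η * √(2 * β * W ^ 2 * L * T) := by
  have hη2 : η ^ 2 = 2 * L / (β * W ^ 2 * T) := by rw [hη, Real.sq_sqrt (by positivity)]
  have hcancel : β * W ^ 2 * T * (2 * L / (β * W ^ 2 * T)) = 2 * L :=
    mul_div_cancel₀ _ hβWT.ne'
  have hquad : T * (β / 2 * η ^ 2 * W ^ 2) = L := by
    rw [hη2]; linear_combination hcancel / 2
  have hsq : 2 * L / (β * W ^ 2 * T) * (2 * β * W ^ 2 * L * T) = (2 * L) ^ 2 := by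
    linear_combination 2 * L * hcancel
  rw [hquad, hη, ← Real.sqrt_mul (by positivity), hsq, Real.sqrt_sq (by positivity)]
  ring

section NPG

variable {E : Type*} [NormedAddCommGroup E] [InnerProductSpace ℝ E] [CompleteSpace E]
  {A : Type*} [Fintype A] {p : E → A → ℝ} {G : E → A → E} {β : ℝ}

theorem npg_step (hgrad : ∀ θ a, HasGradientAt (fun θ' => Real.log (p θ' a)) (G θ a) θ)
    (hlip : ∀ a θ θ', ‖G θ a - G θ' a‖ ≤ β * ‖θ - θ'‖)
    {q : A → ℝ} (hq0 : ∀ a, 0 ≤ q a) (hq1 : ∑ a, q a = 1) (θ w : E) (η : ℝ) :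
    η * ∑ a, q a * inner ℝ w (G θ a)
      ≤ ∑ a, q a * Real.log (p (θ + η • w) a) - ∑ a, q a * Real.log (p θ a)
        + β / 2 * η ^ 2 * ‖w‖ ^ 2 := by
  have hdescent : ∀ a, η * inner ℝ w (G θ a)
      ≤ Real.log (p (θ + η • w) a) - Real.log (p θ a) + β / 2 * η ^ 2 * ‖w‖ ^ 2 := by
    intro a
    have := inner_sub_half_mul_sq_le_of_lipschitz_gradient (hgrad · a) (hlip a) θ (η • w)
    rw [real_inner_smul_right, real_inner_comm, norm_smul, mul_pow, Real.norm_eq_abs,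
      sq_abs] at this
    linarith
  calc η * ∑ a, q a * inner ℝ w (G θ a) = ∑ a, q a * (η * inner ℝ w (G θ a)) := by
        rw [mul_sum]; exact sum_congr rfl fun a _ => by ring
    _ ≤ ∑ a, q a * (Real.log (p (θ + η • w) a) - Real.log (p θ a) + β / 2 * η ^ 2 * ‖w‖ ^ 2) :=
        sum_le_sum fun a _ => mul_le_mul_of_nonneg_left (hdescent a) (hq0 a)
    _ = _ := by
        simp only [mul_add, mul_sub, sum_add_distrib, sum_sub_distrib, ← sum_mul, hq1, one_mul]

theorem npg_regret_telescope (hβ : 0 ≤ β)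
    (hgrad : ∀ θ a, HasGradientAt (fun θ' => Real.log (p θ' a)) (G θ a) θ)
    (hlip : ∀ a θ θ', ‖G θ a - G θ' a‖ ≤ β * ‖θ - θ'‖)
    {q : A → ℝ} (hq0 : ∀ a, 0 ≤ q a) (hq1 : ∑ a, q a = 1) {T : ℕ} {η W : ℝ} {θ w : ℕ → E}
    (hw : ∀ t ∈ Icc 1 T, ‖w t‖ ≤ W) (hupd : ∀ t ∈ Icc 1 T, θ (t + 1) = θ t + η • w t) :
    η * ∑ t ∈ Icc 1 T, ∑ a, q a * inner ℝ (w t) (G (θ t) a)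
      ≤ ∑ a, q a * Real.log (p (θ (T + 1)) a) - ∑ a, q a * Real.log (p (θ 1) a)
        + T * (β / 2 * η ^ 2 * W ^ 2) := by
  set Ψ : ℕ → ℝ := fun t => ∑ a, q a * Real.log (p (θ t) a)
  have hstep : ∀ t ∈ Icc 1 T, η * ∑ a, q a * inner ℝ (w t) (G (θ t) a)
      ≤ Ψ (t + 1) - Ψ t + β / 2 * η ^ 2 * W ^ 2 := by
    intro t ht
    have hwW : ‖w t‖ ^ 2 ≤ W ^ 2 := pow_le_pow_left₀ (norm_nonneg _) (hw t ht) 2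
    have := npg_step hgrad hlip hq0 hq1 (θ t) (w t) η
    rw [← hupd t ht] at this
    have : β / 2 * η ^ 2 * ‖w t‖ ^ 2 ≤ β / 2 * η ^ 2 * W ^ 2 := by gcongr
    linarith
  calc η * ∑ t ∈ Icc 1 T, ∑ a, q a * inner ℝ (w t) (G (θ t) a)
      = ∑ t ∈ Icc 1 T, η * ∑ a, q a * inner ℝ (w t) (G (θ t) a) := mul_sum _ _ _
    _ ≤ ∑ t ∈ Icc 1 T, (Ψ (t + 1) - Ψ t + β / 2 * η ^ 2 * W ^ 2) := sum_le_sum hstep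
    _ = Ψ (T + 1) - Ψ 1 + T * (β / 2 * η ^ 2 * W ^ 2) := by
        rw [sum_add_distrib, ← Ico_add_one_right_eq_Icc, sum_Ico_sub Ψ (by omega), sum_const,
          Nat.card_Ico, nsmul_eq_mul, Nat.add_sub_cancel]

theorem npg_regret_le (hA : 2 ≤ Fintype.card A) {T : ℕ} (hT : 1 ≤ T) (hβ : 0 < β) {W : ℝ}
    (hW : 0 < W) {η : ℝ} (hη : η = √(2 * Real.log (Fintype.card A) / (β * W ^ 2 * T)))
    (hp0 : ∀ θ a, 0 < p θ a) (hp1 : ∀ θ, ∑ a, p θ a = 1)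
    (hgrad : ∀ θ a, HasGradientAt (fun θ' => Real.log (p θ' a)) (G θ a) θ)
    (hlip : ∀ a θ θ', ‖G θ a - G θ' a‖ ≤ β * ‖θ - θ'‖) {θ w : ℕ → E}
    (hθ1 : ∀ a, p (θ 1) a = 1 / Fintype.card A) (hw : ∀ t ∈ Icc 1 T, ‖w t‖ ≤ W)
    (hupd : ∀ t, 1 ≤ t → t < T → θ (t + 1) = θ t + η • w t)
    {q : A → ℝ} (hq0 : ∀ a, 0 ≤ q a) (hq1 : ∑ a, q a = 1) :
    ∑ t ∈ Icc 1 T, ∑ a, q a * inner ℝ (w t) (G (θ t) a)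
      ≤ √(2 * β * W ^ 2 * Real.log (Fintype.card A) * T) := by
  set L := Real.log (Fintype.card A)
  have hL : 0 < L := Real.log_pos (by exact_mod_cast hA)
  have hβWT : 0 < β * W ^ 2 * T := by positivity
  have hη0 : 0 < η := hη ▸ Real.sqrt_pos.mpr (by positivity)
  -- The update rule says nothing about `θ (T + 1)`; the telescoping needs it.
  set θ' := Function.update θ (T + 1) (θ T + η • w T)
  have hθ' : ∀ t ∈ Icc 1 T, θ' t = θ t := fun t ht =>
    Function.update_of_ne (by grind) _ _
  have hupd' : ∀ t ∈ Icc 1 T, θ' (t + 1) = θ' t + η • w t := by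
    intro t ht
    rw [hθ' t ht]
    rcases (mem_Icc.mp ht).2.lt_or_eq with hlt | rfl
    · rw [hθ' (t + 1) (by grind)]; exact hupd t (mem_Icc.mp ht).1 hlt
    · exact Function.update_self _ _ _
  have key := npg_regret_telescope hβ.le hgrad hlip hq0 hq1 hw hupd'
  rw [sum_congr rfl fun t ht => by rw [hθ' t ht], hθ' 1 (by simp [hT]), funext hθ1,
    sum_mul_log_uniform hq1] at key
  have hend := sum_mul_log_nonpos hq0 (hp0 (θ' (T + 1))) (hp1 _)
  refine le_of_mul_le_mul_left ?_ hη0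
  rw [← add_mul_sq_eq_mul_sqrt hL.le hβWT hη]
  linarith

end NPG

theorem sub_sum_mul_add_inner_eq_inner {E : Type*} [NormedAddCommGroup E] [InnerProductSpace ℝ E]
    {A : Type*} [Fintype A] {p : A → ℝ} {G : A → E} (hp1 : ∑ a, p a = 1)
    (hG : ∑ a, p a • G a = 0) (c : ℝ) (w : E) (a : A) :
    c + inner ℝ w (G a) - ∑ a', p a' * (c + inner ℝ w (G a')) = inner ℝ w (G a) := by
  have hmean : ∑ a', p a' * inner ℝ w (G a') = 0 := by
    simp only [← real_inner_smul_right, ← inner_sum, hG, inner_zero_right]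
  rw [sum_congr rfl fun a' _ => mul_add (p a') _ _, sum_add_distrib, ← sum_mul, hp1, hmean]
  ring

section Occupancy

variable {S A : Type*} [Fintype S] [Fintype A] (M : FinMDP S A) {π : S → A → ℝ}

namespace FinMDP

noncomputable def stateOcc (π : S → A → ℝ) (s : S) : ℝ :=
  (1 - M.disc) * ∑' t : ℕ, M.disc ^ t * M.stateDist π t s

theorem stateDist_nonneg (hπ : ∀ s a, 0 ≤ π s a) (t : ℕ) (s : S) : 0 ≤ M.stateDist π t s := by
  induction t generalizing s with
  | zero => exact M.init_nonneg s
  | succ t ih =>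
    exact sum_nonneg fun s' _ => sum_nonneg fun a _ =>
      mul_nonneg (mul_nonneg (ih s') (hπ s' a)) (M.P_nonneg s' a s)

theorem sum_stateDist (hπ : IsPolicy π) (t : ℕ) : ∑ s, M.stateDist π t s = 1 := by
  induction t with
  | zero => exact M.init_sum
  | succ t ih =>
    calc ∑ s', M.stateDist π (t + 1) s'
        = ∑ s, ∑ a, M.stateDist π t s * π s a * ∑ s', M.P s a s' := by
          simp only [stateDist, mul_sum]
          rw [sum_comm]
          exact sum_congr rfl fun s _ => sum_comm
      _ = 1 := by simp only [M.P_sum, mul_one, ← mul_sum, hπ.2, ih]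

theorem summable_disc_pow_mul_stateDist (hπ : IsPolicy π) (s : S) :
    Summable fun t => M.disc ^ t * M.stateDist π t s := by
  refine (summable_geometric_of_lt_one M.disc_pos.le M.disc_lt_one).of_nonneg_of_le
    (fun t => mul_nonneg (pow_nonneg M.disc_pos.le t) (M.stateDist_nonneg hπ.1 t s))
    fun t => mul_le_of_le_one_right (pow_nonneg M.disc_pos.le t) ?_
  exact M.sum_stateDist hπ t ▸ single_le_sum (fun s' _ => M.stateDist_nonneg hπ.1 t s') (mem_univ s)

theorem stateOcc_nonneg (hπ : ∀ s a, 0 ≤ π s a) (s : S) : 0 ≤ M.stateOcc π s :=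
  mul_nonneg (sub_nonneg.mpr M.disc_lt_one.le)
    (tsum_nonneg fun t => mul_nonneg (pow_nonneg M.disc_pos.le t) (M.stateDist_nonneg hπ t s))

theorem sum_stateOcc (hπ : IsPolicy π) : ∑ s, M.stateOcc π s = 1 := by
  have hdisc : 1 - M.disc ≠ 0 := (sub_pos.mpr M.disc_lt_one).ne'
  simp only [stateOcc, ← mul_sum]
  rw [← Summable.tsum_finsetSum fun s _ => M.summable_disc_pow_mul_stateDist hπ s]
  simp only [← mul_sum, M.sum_stateDist hπ, mul_one]
  rw [tsum_geometric_of_lt_one M.disc_pos.le M.disc_lt_one, mul_inv_cancel₀ hdisc]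

theorem occ_eq_stateOcc_mul (π : S → A → ℝ) (s : S) (a : A) :
    M.occ π s a = M.stateOcc π s * π s a := by
  rw [occ, stateOcc, tsum_mul_right, mul_assoc]

end FinMDP

end Occupancy
/-- Parameterized NPG regret lemma. -/
theorem stmt17 {d : ℕ} (M : FinMDP S A) (hA : 2 ≤ Fintype.card A) (T : ℕ) (hT : 1 ≤ T)
    (β W : ℝ) (hβ : 0 < β) (hW : 0 < W)
    (η : ℝ)
    (hη : η = Real.sqrt (2 * Real.log (Fintype.card A) / (β * W ^ 2 * T)))
    (Pol : EuclideanSpace ℝ (Fin d) → S → A → ℝ)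
    (hPolpos : ∀ θ s a, 0 < Pol θ s a)
    (hPolsum : ∀ θ s, ∑ a, Pol θ s a = 1)
    (G : EuclideanSpace ℝ (Fin d) → S → A → EuclideanSpace ℝ (Fin d))
    (hgrad : ∀ θ s a, HasGradientAt (fun θ' => Real.log (Pol θ' s a)) (G θ s a) θ)
    (hlip : ∀ s a θ θ', ‖G θ s a - G θ' s a‖ ≤ β * ‖θ - θ'‖)
    (hzero : ∀ θ s, ∑ a, Pol θ s a • G θ s a = 0)
    (θseq : ℕ → EuclideanSpace ℝ (Fin d))
    (hθ1 : ∀ s a, Pol (θseq 1) s a = 1 / Fintype.card A)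
    (w : ℕ → EuclideanSpace ℝ (Fin d))
    (hw : ∀ t ∈ Finset.Icc 1 T, ‖w t‖ ≤ W)
    (hupd : ∀ t, 1 ≤ t → t < T → θseq (t + 1) = θseq t + η • w t)
    (f : ℕ → S → A → ℝ)
    (g : ℕ → S → A → ℝ)
    (hg : ∀ t s a, g t s a =
      (∑ a', Pol (θseq t) s a' * f t s a') + (inner ℝ (w t) (G (θseq t) s a) : ℝ))
    (πe : S → A → ℝ) (hπe : IsPolicy πe) :
    ∑ t ∈ Finset.Icc 1 T,
        ∑ s, ∑ a, M.occ πe s a * (g t s a - ∑ a', Pol (θseq t) s a' * g t s a')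
      ≤ Real.sqrt (2 * β * W ^ 2 * Real.log (Fintype.card A) * T) := by
  have hadv : ∀ t s a, g t s a - ∑ a', Pol (θseq t) s a' * g t s a'
      = inner ℝ (w t) (G (θseq t) s a) := fun t s a => by
    simp only [hg]
    exact sub_sum_mul_add_inner_eq_inner (hPolsum _ s) (hzero _ s) _ _ a
  have hregret : ∀ s, ∑ t ∈ Icc 1 T, ∑ a, πe s a * inner ℝ (w t) (G (θseq t) s a)
      ≤ √(2 * β * W ^ 2 * Real.log (Fintype.card A) * T) := fun s =>
    npg_regret_le (p := fun θ => Pol θ s) hA hT hβ hW hη (hPolpos · s) (hPolsum · s)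
      (hgrad · s) (hlip s) (hθ1 s) hw hupd (hπe.1 s) (hπe.2 s)
  calc _ = ∑ s, M.stateOcc πe s * ∑ t ∈ Icc 1 T, ∑ a, πe s a * inner ℝ (w t) (G (θseq t) s a) := by
        simp only [hadv, M.occ_eq_stateOcc_mul, mul_assoc, mul_sum]
        exact sum_comm
    _ ≤ ∑ s, M.stateOcc πe s * √(2 * β * W ^ 2 * Real.log (Fintype.card A) * T) :=
        sum_le_sum fun s _ => mul_le_mul_of_nonneg_left (hregret s) (M.stateOcc_nonneg hπe.1 s)
    _ = _ := by rw [← sum_mul, M.sum_stateOcc hπe, one_mul]
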